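/- arXiv:1811.08733 — 2 statements merged into one kernel-verified Lean document; each statement's English description precedes it below -/
import Mathlib

section
/- Let a = (a_1, a_3, a_5, …) be a sequence of complex numbers and let T_a : B → B be the shift operator (T_a p)(t_1,t_3,t_5,…) = p(t_1 + a_1, t_3 + a_3, t_5 + a_5, …). Then for every j ∈ ℤ, as operators on B, T_a ∘ φ̂_j ∘ T_a^{−1} = Σ_{ℓ≥0} s_ℓ(ã) φ̂_{j+ℓ}, where ã = (a_1, 0, a_3, 0, a_5, 0, …); equivalently, in generating series form, T_a ∘ φ̂(z) ∘ T_a^{−1} = exp(Σ_{k>0 odd} a_k z^k) φ̂(z), where φ̂(z) = Σ_{j∈ℤ} φ̂_j z^{−j}. (Applied to any polynomial, the sum over ℓ is finite.) -/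
/- ## Setup: the ring `B = ℂ[t₁,t₃,t₅,…]`, elementary Schur polynomials,
   vertex-operator coefficients, and the BKP bilinear identity. -/

noncomputable section

open MvPolynomial

/-- The polynomial ring `B = ℂ[t₁,t₃,t₅,…]`; variable `i` represents `t_{2i+1}`. -/
abbrev BRing : Type := MvPolynomial ℕ ℂ

/-- The universal elementary Schur polynomials `s_n`, defined by
`exp (∑_{j≥1} t_j z^j) = ∑_{n≥0} s_n(t) z^n`; here the variable `j` (for `j ≥ 1`)
represents `t_j`.  They satisfy `s_0 = 1` and `(n+1) s_{n+1} = ∑_{j=1}^{n+1} j t_j s_{n+1-j}`. -/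
def schurPoly : ℕ → MvPolynomial ℕ ℂ
  | 0 => 1
  | n + 1 =>
      ((n + 1 : ℂ))⁻¹ •
        ∑ j ∈ Finset.range (n + 1),
          ((j + 1 : ℂ)) • (MvPolynomial.X (j + 1) * schurPoly (n - j))
  termination_by n => n
  decreasing_by omega

/-- `s_n(c)` for a complex sequence `c = (c_1, c_2, …)` (the entry `c 0` is ignored). -/
def sC (n : ℕ) (c : ℕ → ℂ) : ℂ := MvPolynomial.eval c (schurPoly n)

/-- `s_n` evaluated on a sequence of elements of `B`. -/
def sB (n : ℕ) (c : ℕ → BRing) : BRing := MvPolynomial.aeval c (schurPoly n)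

/-- The sequence `t̃ = (t₁, 0, t₃, 0, t₅, 0, …)` of elements of `B`. -/
def tTilde : ℕ → BRing := fun j => if j % 2 = 1 then MvPolynomial.X ((j - 1) / 2) else 0

/-- The sequence `t̃ + c` for a constant sequence `c`. -/
def tShift (c : ℕ → ℂ) : ℕ → BRing := fun j => tTilde j + MvPolynomial.C (c j)

/-- `s̃_m = s_m(t̃) ∈ B` for `m ≥ 0`, and `0` for `m < 0`; these are the coefficients of
`exp (∑_{j>0 odd} t_j z^j)`. -/
def sTildeZ (m : ℤ) : BRing :=
  if 0 ≤ m then MvPolynomial.aeval tTilde (schurPoly m.toNat) else 0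

/-- `s_m(-t̃) ∈ B` for `m ≥ 0`, and `0` for `m < 0`; the coefficients of
`exp (-∑_{j>0 odd} t_j z^j)`. -/
def sTildeNegZ (m : ℤ) : BRing :=
  if 0 ≤ m then MvPolynomial.aeval (fun j => -(tTilde j)) (schurPoly m.toNat) else 0

/-- `p(t₁ - 2w, t₃ - (2/3)w³, t₅ - (2/5)w⁵, …)` as a polynomial in `w` (which stands for
`z⁻¹`) over `B`: this is `exp (-2∑_{j>0 odd} (1/j) ∂/∂t_j z^{-j}) p` by Taylor's formula. -/
def shiftMinus (p : BRing) : Polynomial BRing :=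
  MvPolynomial.aeval
    (fun i => Polynomial.C (MvPolynomial.X i) -
      Polynomial.C (MvPolynomial.C ((2 : ℂ) / ((2 * i + 1 : ℕ) : ℂ))) *
        Polynomial.X ^ (2 * i + 1)) p

/-- `p(t₁ + 2w, t₃ + (2/3)w³, …)`, i.e. `exp (2∑_{j>0 odd} (1/j) ∂/∂t_j z^{-j}) p`. -/
def shiftPlus (p : BRing) : Polynomial BRing :=
  MvPolynomial.aeval
    (fun i => Polynomial.C (MvPolynomial.X i) +
      Polynomial.C (MvPolynomial.C ((2 : ℂ) / ((2 * i + 1 : ℕ) : ℂ))) *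
        Polynomial.X ^ (2 * i + 1)) p

/-- The coefficient of `z^m` in
`exp (∑_{j>0 odd} t_j z^j) exp (-2∑_{j>0 odd} (1/j)(∂/∂t_j) z^{-j}) τ`. -/
def leftCoeff (τ : BRing) (m : ℤ) : BRing :=
  ∑ᶠ k : ℕ, sTildeZ (m + k) * (shiftMinus τ).coeff k

/-- The coefficient of `z^m` in
`exp (-∑_{j>0 odd} t_j z^j) exp (2∑_{j>0 odd} (1/j)(∂/∂t_j) z^{-j}) τ`. -/
def rightCoeff (τ : BRing) (m : ℤ) : BRing :=
  ∑ᶠ k : ℕ, sTildeNegZ (m + k) * (shiftPlus τ).coeff k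

/-- `ℂ[t₁,t₃,…] ⊗ ℂ[t'₁,t'₃,…]`, realized as polynomials in two families of variables. -/
abbrev BRing2 : Type := MvPolynomial (ℕ ⊕ ℕ) ℂ

/-- The embedding `p(t) ↦ p(t) ∈ ℂ[t] ⊗ ℂ[t']` on the first factor. -/
def inL : BRing →+* BRing2 := (MvPolynomial.rename Sum.inl).toRingHom

/-- The embedding `p(t') ↦ p(t') ∈ ℂ[t] ⊗ ℂ[t']` on the second factor. -/
def inR : BRing →+* BRing2 := (MvPolynomial.rename Sum.inr).toRingHom

/-- The BKP bilinear identity on `τ ∈ ℂ[t₁,t₃,t₅,…]`: the coefficient of `z⁰` in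
`(exp(∑ t_j z^j) exp(-2∑ (1/j)∂_{t_j} z^{-j}) τ)(t) ·
 (exp(-∑ t'_j z^j) exp(2∑ (1/j)∂_{t'_j} z^{-j}) τ)(t')`
equals `τ(t) τ(t')` (all sums over odd `j > 0`; only finitely many summands below
are nonzero since `τ` is a polynomial). -/
def SatisfiesBKP (τ : BRing) : Prop :=
  ∑ᶠ m : ℤ, inL (leftCoeff τ m) * inR (rightCoeff τ (-m)) = inL τ * inR τ

/-- The MDKP bilinear identity on a pair `(τ₀, τ₁)`. -/
def SatisfiesMDKP (τ₀ τ₁ : BRing) : Prop :=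
  ∑ᶠ m : ℤ, inL (leftCoeff τ₀ m) * inR (rightCoeff τ₁ (-m)) = inL τ₁ * inR τ₀

/-- The condition on a permutation `σ` appearing in the definition of the Pfaffian:
`σ(2i-1) < σ(2i)` for all `i`, and `σ(1) < σ(3) < ⋯` (with 0-based indices here). -/
def pfaffianCond {m : ℕ} (σ : Equiv.Perm (Fin m)) : Prop :=
  (∀ i : Fin (m / 2),
      σ ⟨2 * i.val, by have := i.isLt; omega⟩ < σ ⟨2 * i.val + 1, by have := i.isLt; omega⟩) ∧
  (∀ i j : Fin (m / 2), i < j →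
      σ ⟨2 * i.val, by have := i.isLt; omega⟩ < σ ⟨2 * j.val, by have := j.isLt; omega⟩)

open scoped Classical in
/-- The Pfaffian `Pf(A) = ∑_σ sgn(σ) ∏_i a_{σ(2i-1),σ(2i)}` of a (skew-symmetric) matrix;
it is intended to be used for matrices of even size `m = 2n`. -/
def pfaffian {R : Type*} [CommRing R] {m : ℕ} (A : Matrix (Fin m) (Fin m) R) : R :=
  ∑ σ : Equiv.Perm (Fin m),
    if pfaffianCond σ then
      (Equiv.Perm.sign σ : ℤ) •
        ∏ i : Fin (m / 2),
          A (σ ⟨2 * i.val, by have := i.isLt; omega⟩)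
            (σ ⟨2 * i.val + 1, by have := i.isLt; omega⟩)
    else 0

/-- The skew-symmetric matrix with `(i,j)`-entry `f i j` for `i < j`. -/
def skewOf {R : Type*} [CommRing R] {m : ℕ} (f : Fin m → Fin m → R) :
    Matrix (Fin m) (Fin m) R :=
  Matrix.of fun i j => if i < j then f i j else if j < i then -f j i else 0

/-- `χ_{λ,μ}(c,c') = (1/2) s_λ(c) s_μ(c') + ∑_{ℓ=1}^{μ} (-1)^ℓ s_{λ+ℓ}(c) s_{μ-ℓ}(c')`,
for `λ > μ ≥ 0` and sequences `c, c'` of elements of `B`. -/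
def chiB (l μ : ℕ) (c c' : ℕ → BRing) : BRing :=
  (2 : ℂ)⁻¹ • (sB l c * sB μ c') +
    ∑ ℓ ∈ Finset.Icc 1 μ, ((-1 : ℂ) ^ ℓ) • (sB (l + ℓ) c * sB (μ - ℓ) c')

/-- The skew-symmetric matrix `( χ_{λ_i,λ_j}(t̃+c_i, t̃+c_j) )_{i,j}`. -/
def chiMatrix {m : ℕ} (lam : Fin m → ℕ) (c : Fin m → ℕ → ℂ) :
    Matrix (Fin m) (Fin m) BRing :=
  skewOf fun i j => chiB (lam i) (lam j) (tShift (c i)) (tShift (c j))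

/-- `√2` as a complex number. -/
def sqrt2 : ℂ := (Real.sqrt 2 : ℂ)

/-- `ρ_{λ,μ}(c,c';b,b') = (s_λ(c)/√2 - b)(s_μ(c')/√2 + b')
  + ∑_{ℓ=1}^{μ} (-1)^ℓ s_{λ+ℓ}(c) s_{μ-ℓ}(c')` for `λ > μ ≥ 0`. -/
def rhoB (l μ : ℕ) (c c' : ℕ → BRing) (b b' : ℂ) : BRing :=
  (sqrt2⁻¹ • sB l c - MvPolynomial.C b) * (sqrt2⁻¹ • sB μ c' + MvPolynomial.C b') +
    ∑ ℓ ∈ Finset.Icc 1 μ, ((-1 : ℂ) ^ ℓ) • (sB (l + ℓ) c * sB (μ - ℓ) c')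

/-- `ρ_λ(c;b) = s_λ(c)/√2 + b`. -/
def rho1B (l : ℕ) (c : ℕ → BRing) (b : ℂ) : BRing :=
  sqrt2⁻¹ • sB l c + MvPolynomial.C b

/-- The `2n × 2n` skew-symmetric matrix `( ρ_{λ_i,λ_j}(t̃+c_i, t̃+c_j; b_i, b_j) )_{i,j}`
(for an even number `m = 2n` of rows of `λ`). -/
def rhoMatrixEven {m : ℕ} (lam : Fin m → ℕ) (c : Fin m → ℕ → ℂ) (b : Fin m → ℂ) :
    Matrix (Fin m) (Fin m) BRing :=
  skewOf fun i j => rhoB (lam i) (lam j) (tShift (c i)) (tShift (c j)) (b i) (b j)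

/-- For an odd number `m` of parts `λ_1 > ⋯ > λ_m ≥ 0`, the `(m+1) × (m+1)`
skew-symmetric matrix with rows/columns indexed by `0, 1, …, m`, whose `(0,j)`-entry is
`ρ_{λ_j}(t̃+c_j; b_j)` and whose `(i,j)`-entry for `1 ≤ i < j` is
`ρ_{λ_i,λ_j}(t̃+c_i, t̃+c_j; b_i, b_j)`. -/
def rhoMatrixOdd {m : ℕ} (lam : Fin m → ℕ) (c : Fin m → ℕ → ℂ) (b : Fin m → ℂ) :
    Matrix (Fin (m + 1)) (Fin (m + 1)) BRing :=
  skewOf fun i j =>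
    if i.val = 0 then
      if hj : j.val = 0 then 0
      else
        rho1B (lam ⟨j.val - 1, by have := j.isLt; omega⟩)
          (tShift (c ⟨j.val - 1, by have := j.isLt; omega⟩))
          (b ⟨j.val - 1, by have := j.isLt; omega⟩)
    else
      if hj : j.val = 0 then 0
      else
        rhoB (lam ⟨i.val - 1, by have := i.isLt; omega⟩)
          (lam ⟨j.val - 1, by have := j.isLt; omega⟩)
          (tShift (c ⟨i.val - 1, by have := i.isLt; omega⟩))
          (tShift (c ⟨j.val - 1, by have := j.isLt; omega⟩))
          (b ⟨i.val - 1, by have := i.isLt; omega⟩)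
          (b ⟨j.val - 1, by have := j.isLt; omega⟩)

/-- The DKP tau-function `ρ_λ(t̃; c_1,…,c_k; b_1,…,b_k)` attached to an extended strict
partition `λ` with `k` parts: a Pfaffian of size `k` if `k` is even, and of size `k+1`
(with an extra 0-th row built from the `ρ_{λ_j}`) if `k` is odd. -/
def rhoTau {k : ℕ} (lam : Fin k → ℕ) (c : Fin k → ℕ → ℂ) (b : Fin k → ℂ) : BRing :=
  if k % 2 = 0 then pfaffian (rhoMatrixEven lam c b)
  else pfaffian (rhoMatrixOdd lam c b)

/-- The operators `φ̂_j` (`j ∈ ℤ`) on `B`, defined by the generating series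
`∑_{j∈ℤ} φ̂_j z^{-j} = (1/√2) exp(∑_{k>0 odd} t_k z^k) exp(-∑_{k>0 odd} (2/k) ∂_{t_k} z^{-k})`. -/
def phiHat (j : ℤ) (p : BRing) : BRing :=
  sqrt2⁻¹ • ∑ᶠ k : ℕ, sTildeZ ((k : ℤ) - j) * (shiftMinus p).coeff k

/-- `a : ℤ → ℂ` vanishes for all sufficiently negative indices. -/
def BddBelowSupport (a : ℤ → ℂ) : Prop := ∃ N : ℤ, ∀ j < N, a j = 0

/-- The operator `v = ∑_{j∈ℤ} a_j φ̂_j` on `B` (a finite sum on each polynomial,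
when `a` has support bounded below). -/
def vOp (a : ℤ → ℂ) (p : BRing) : BRing := ∑ᶠ j : ℤ, a j • phiHat j p

/-- Evaluation at `t = 0`, `ev₀ : B → ℂ` (the vacuum expectation value). -/
def ev0 : BRing → ℂ := MvPolynomial.eval (fun _ => 0)

/-- The "`√2` times `φ̂_j`" vertex operator coefficients (without the `1/√2` factor),
used for the type `D` construction. -/
def vertexB (j : ℤ) (p : BRing) : BRing :=
  ∑ᶠ k : ℕ, sTildeZ ((k : ℤ) - j) * (shiftMinus p).coeff k

/-- `B_D = ℂ[θ] ⊗ B` with `θ` a Grassmann variable: the pair `(p₀, p₁)` represents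
`p₀ + θ p₁`. -/
abbrev BD : Type := BRing × BRing

/-- The operators `Φ̂_j` (`j ∈ ℤ`) on `B_D`, defined by
`∑_j Φ̂_j z^{-j} = (1/√2)(θ + ∂/∂θ) exp(∑ t_k z^k) exp(-∑ (2/k) ∂_{t_k} z^{-k})`. -/
def PhiHatD (j : ℤ) (p : BD) : BD :=
  sqrt2⁻¹ • (vertexB j p.2, vertexB j p.1)

/-- `Ψ = (θ - ∂/∂θ)/√2` on `B_D`. -/
def PsiD (p : BD) : BD := sqrt2⁻¹ • (-p.2, p.1)

/-- The type `D` fermions `φ̂_a`, `a ∈ ½ + ℤ`, where the integer `m` encodes the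
half-integer index `a = m + ½`:  `φ̂_{-i-½} = Φ̂_{-i}` and `φ̂_{i+½} = (-1)^i Φ̂_i`
for `i ≥ 1`, `φ̂_{-½} = (Φ̂_0 + Ψ)/√2`, `φ̂_{½} = (Φ̂_0 - Ψ)/√2`. -/
def phiD (m : ℤ) (p : BD) : BD :=
  if m ≤ -2 then PhiHatD (m + 1) p
  else if m = -1 then sqrt2⁻¹ • (PhiHatD 0 p + PsiD p)
  else if m = 0 then sqrt2⁻¹ • (PhiHatD 0 p - PsiD p)
  else ((-1 : ℂ) ^ m) • PhiHatD m p

end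

noncomputable section

/-- The shift operator `T_a : p(t₁,t₃,t₅,…) ↦ p(t₁+a₁, t₃+a₃, t₅+a₅, …)`, where `a i`
stands for `a_{2i+1}`. -/
noncomputable def shiftT (a : ℕ → ℂ) : BRing →ₐ[ℂ] BRing :=
  MvPolynomial.aeval (fun i => MvPolynomial.X i + MvPolynomial.C (a i))

/-- The interleaved sequence `ã = (a₁, 0, a₃, 0, a₅, 0, …)` (indexed from 1). -/
def seqTilde (a : ℕ → ℂ) : ℕ → ℂ := fun j => if j % 2 = 1 then a ((j - 1) / 2) else 0

section SchurAux

open PowerSeries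

variable {R : Type*} [CommRing R] [Algebra ℂ R]

lemma algebraMap_succ (i : ℕ) : algebraMap ℂ R ((i : ℂ) + 1) = ((i + 1 : ℕ) : R) := by
  push_cast
  simp

lemma natCast_mul_algebraMap_inv (n : ℕ) :
    ((n + 1 : ℕ) : R) * algebraMap ℂ R (((n : ℂ) + 1))⁻¹ = 1 := by
  rw [← algebraMap_succ, ← map_mul, mul_inv_cancel₀ (Nat.cast_add_one_ne_zero n), map_one]

lemma cancel_succ {x y : R} (n : ℕ) (h : x * ((n : R) + 1) = y * ((n : R) + 1)) : x = y := by
  have hc : ((n : R) + 1) * algebraMap ℂ R (((n : ℂ) + 1))⁻¹ = 1 := by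
    have : ((n : R) + 1) = ((n + 1 : ℕ) : R) := by push_cast; ring
    rw [this]; exact natCast_mul_algebraMap_inv n
  have h2 := congrArg (fun z => z * algebraMap ℂ R (((n : ℂ) + 1))⁻¹) h
  simpa [mul_assoc, hc] using h2

lemma schur_rec (u : ℕ → R) (n : ℕ) :
    ((n + 1 : ℕ) : R) * MvPolynomial.aeval u (schurPoly (n + 1)) =
      ∑ i ∈ Finset.range (n + 1),
        ((i + 1 : ℕ) : R) * (u (i + 1) * MvPolynomial.aeval u (schurPoly (n - i))) := by
  rw [schurPoly]
  rw [map_smul, map_sum, Algebra.smul_def, ← mul_assoc, natCast_mul_algebraMap_inv, one_mul]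
  refine Finset.sum_congr rfl fun i _ => ?_
  rw [map_smul, map_mul, MvPolynomial.aeval_X, Algebra.smul_def, algebraMap_succ]

lemma coeff_derivativeFun' (f : PowerSeries R) (n : ℕ) :
    PowerSeries.coeff n f.derivativeFun = PowerSeries.coeff (n + 1) f * (n + 1) :=
  PowerSeries.coeff_derivative f n

/-- The generating power series of the `s_n(u)`. -/
noncomputable def FPS (u : ℕ → R) : PowerSeries R :=
  PowerSeries.mk fun n => MvPolynomial.aeval u (schurPoly n)

/-- Its logarithmic-derivative multiplier `∑ (n+1) u_{n+1} z^n`. -/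
noncomputable def GPS (u : ℕ → R) : PowerSeries R :=
  PowerSeries.mk fun n => ((n + 1 : ℕ) : R) * u (n + 1)

lemma derivFPS (u : ℕ → R) : (FPS u).derivativeFun = GPS u * FPS u := by
  ext n
  rw [coeff_derivativeFun', PowerSeries.coeff_mul,
    Finset.Nat.sum_antidiagonal_eq_sum_range_succ_mk]
  simp only [FPS, GPS, PowerSeries.coeff_mk]
  rw [mul_comm, show ((n : R) + 1) = ((n + 1 : ℕ) : R) by push_cast; ring, schur_rec]
  exact Finset.sum_congr rfl fun i _ => (mul_assoc _ _ _).symm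

lemma ode_unique (g A B : PowerSeries R)
    (hA : A.derivativeFun = g * A) (hB : B.derivativeFun = g * B)
    (h0 : PowerSeries.coeff 0 A = PowerSeries.coeff 0 B) : A = B := by
  ext n
  induction n using Nat.strong_induction_on with
  | _ n ih =>
    match n with
    | 0 => exact h0
    | n + 1 =>
      have hA' := congrArg (PowerSeries.coeff n) hA
      have hB' := congrArg (PowerSeries.coeff n) hB
      rw [coeff_derivativeFun', PowerSeries.coeff_mul] at hA' hB'
      have hsum : ∑ p ∈ Finset.HasAntidiagonal.antidiagonal n,
            PowerSeries.coeff p.1 g * PowerSeries.coeff p.2 A =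
          ∑ p ∈ Finset.HasAntidiagonal.antidiagonal n,
            PowerSeries.coeff p.1 g * PowerSeries.coeff p.2 B := by
        refine Finset.sum_congr rfl fun p hp => ?_
        have hp2 : p.2 < n + 1 := by
          have := Finset.HasAntidiagonal.mem_antidiagonal.mp hp; omega
        rw [ih p.2 hp2]
      exact cancel_succ n (by rw [hA', hB', hsum])

lemma FPS_add (u v : ℕ → R) : FPS (fun j => u j + v j) = FPS u * FPS v := by
  apply ode_unique (GPS u + GPS v)
  · rw [derivFPS]
    congr 1
    ext n
    simp only [GPS, PowerSeries.coeff_mk, map_add]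
    ring
  · rw [PowerSeries.derivativeFun_mul, derivFPS, derivFPS, smul_eq_mul, smul_eq_mul]
    ring
  · simp [FPS, PowerSeries.coeff_mul, Finset.Nat.antidiagonal_zero, schurPoly]

lemma schur_add (u v : ℕ → R) (n : ℕ) :
    MvPolynomial.aeval (fun j => u j + v j) (schurPoly n) =
      ∑ i ∈ Finset.range (n + 1),
        MvPolynomial.aeval u (schurPoly i) * MvPolynomial.aeval v (schurPoly (n - i)) := by
  have h := congrArg (PowerSeries.coeff n) (FPS_add u v)
  rw [PowerSeries.coeff_mul, Finset.Nat.sum_antidiagonal_eq_sum_range_succ_mk] at h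
  simpa only [FPS, PowerSeries.coeff_mk] using h

end SchurAux

section MainAux

lemma aeval_C_seq (c : ℕ → ℂ) (q : MvPolynomial ℕ ℂ) :
    MvPolynomial.aeval (fun j => (MvPolynomial.C (c j) : BRing)) q =
      MvPolynomial.C (MvPolynomial.eval c q) := by
  induction q using MvPolynomial.induction_on with
  | C r => simp [MvPolynomial.algebraMap_eq]
  | add p q hp hq => simp only [map_add, hp, hq]
  | mul_X p i hp => simp only [map_mul, hp, MvPolynomial.aeval_X, MvPolynomial.eval_X]

lemma sTildeZ_neg {m : ℤ} (h : m < 0) : sTildeZ m = 0 := if_neg (not_le.mpr h)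

lemma shiftT_C (a : ℕ → ℂ) (c : ℂ) : shiftT a (MvPolynomial.C c) = MvPolynomial.C c := by
  simp [shiftT, MvPolynomial.algebraMap_eq]

lemma shiftT_tTilde (a : ℕ → ℂ) (j : ℕ) :
    shiftT a (tTilde j) = MvPolynomial.C (seqTilde a j) + tTilde j := by
  unfold tTilde seqTilde
  by_cases h : j % 2 = 1 <;> simp [h, shiftT, add_comm]

lemma shiftT_sTildeZ (a : ℕ → ℂ) (m : ℤ) (L : ℕ) (hL : m < L) :
    shiftT a (sTildeZ m) = ∑ ℓ ∈ Finset.range L, sC ℓ (seqTilde a) • sTildeZ (m - ℓ) := by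
  rcases lt_or_ge m 0 with hm | hm
  · rw [sTildeZ_neg hm, map_zero]
    refine (Finset.sum_eq_zero fun ℓ _ => ?_).symm
    rw [sTildeZ_neg (by omega), smul_zero]
  · obtain ⟨n, rfl⟩ : ∃ n : ℕ, m = n := ⟨m.toNat, (Int.toNat_of_nonneg hm).symm⟩
    rw [sTildeZ, if_pos hm, Int.toNat_natCast]
    rw [MvPolynomial.comp_aeval_apply]
    have hfun : (fun i => shiftT a (tTilde i)) =
        fun i => (MvPolynomial.C (seqTilde a i) : BRing) + tTilde i :=
      funext fun i => shiftT_tTilde a i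
    rw [hfun, schur_add]
    have hstep : ∀ i ∈ Finset.range (n + 1),
        MvPolynomial.aeval (fun j => (MvPolynomial.C (seqTilde a j) : BRing)) (schurPoly i) *
            MvPolynomial.aeval tTilde (schurPoly (n - i)) =
          sC i (seqTilde a) • sTildeZ ((n : ℤ) - i) := by
      intro i hi
      have hi' : i ≤ n := by have := Finset.mem_range.mp hi; omega
      rw [aeval_C_seq, sTildeZ, if_pos (by omega), show ((n : ℤ) - i).toNat = n - i by omega,
        MvPolynomial.smul_eq_C_mul]
      rfl
    rw [Finset.sum_congr rfl hstep]
    refine Finset.sum_subset (Finset.range_subset_range.mpr (by omega)) fun ℓ _ hℓ => ?_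
    have : (n : ℤ) - ℓ < 0 := by
      have := Finset.mem_range.not.mp hℓ; omega
    rw [sTildeZ_neg this, smul_zero]

/-- `shiftMinus` as an algebra homomorphism. -/
noncomputable def smA : BRing →ₐ[ℂ] Polynomial BRing :=
  MvPolynomial.aeval
    (fun i => Polynomial.C (MvPolynomial.X i) -
      Polynomial.C (MvPolynomial.C ((2 : ℂ) / ((2 * i + 1 : ℕ) : ℂ))) *
        Polynomial.X ^ (2 * i + 1))

lemma shiftMinus_eq (p : BRing) : shiftMinus p = smA p := rfl

lemma smA_comp (a : ℕ → ℂ) :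
    smA.comp (shiftT a) = (Polynomial.mapAlgHom (shiftT a)).comp smA := by
  apply MvPolynomial.algHom_ext
  intro i
  simp only [AlgHom.comp_apply, smA, shiftT, MvPolynomial.aeval_X, map_add, map_sub, map_mul,
    map_pow, MvPolynomial.aeval_C, Polynomial.coe_mapAlgHom, Polynomial.map_sub, Polynomial.map_mul,
    Polynomial.map_pow, Polynomial.map_C, Polynomial.map_X, AlgHom.coe_toRingHom,
    MvPolynomial.algebraMap_eq, Polynomial.algebraMap_apply]
  ring

lemma coeff_shiftMinus_shiftT (a : ℕ → ℂ) (p : BRing) (k : ℕ) :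
    (shiftMinus (shiftT a p)).coeff k = shiftT a ((shiftMinus p).coeff k) := by
  have h := AlgHom.congr_fun (smA_comp a) p
  simp only [AlgHom.comp_apply] at h
  rw [shiftMinus_eq, shiftMinus_eq, h, Polynomial.coe_mapAlgHom, Polynomial.coeff_map]
  rfl

lemma phiHat_eq_sum (j : ℤ) (q : BRing) (K : ℕ)
    (hK : ∀ k, K ≤ k → (shiftMinus q).coeff k = 0) :
    phiHat j q =
      sqrt2⁻¹ • ∑ k ∈ Finset.range K, sTildeZ ((k : ℤ) - j) * (shiftMinus q).coeff k := by
  unfold phiHat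
  congr 1
  apply finsum_eq_finset_sum_of_support_subset
  intro k hk
  simp only [Function.mem_support] at hk
  simp only [Finset.coe_range, Set.mem_Iio]
  by_contra h
  push_neg at h
  exact hk (by rw [hK k h, mul_zero])

lemma phiHat_eq_zero (j : ℤ) (q : BRing) (K : ℕ)
    (hK : ∀ k, K ≤ k → (shiftMinus q).coeff k = 0)
    (hj : ∀ k, k < K → (k : ℤ) - j < 0) : phiHat j q = 0 := by
  rw [phiHat_eq_sum j q K hK, Finset.sum_eq_zero, smul_zero]
  intro k hk
  rw [sTildeZ_neg (hj k (Finset.mem_range.mp hk)), zero_mul]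

end MainAux

/-- For any sequence `a = (a₁, a₃, a₅, …)` of complex numbers and any
`j ∈ ℤ`, as operators on `B`: `T_a ∘ φ̂_j ∘ T_a⁻¹ = ∑_{ℓ≥0} s_ℓ(ã) φ̂_{j+ℓ}`, stated
equivalently as `T_a ∘ φ̂_j = (∑_{ℓ≥0} s_ℓ(ã) φ̂_{j+ℓ}) ∘ T_a`; applied to any polynomial,
the sum over `ℓ` is finite. -/
theorem shift_conjugation_phiHat (a : ℕ → ℂ) (j : ℤ) (p : BRing) :
    shiftT a (phiHat j p) =
      ∑ᶠ ℓ : ℕ, sC ℓ (seqTilde a) • phiHat (j + ℓ) (shiftT a p) := by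
  set K := (shiftMinus p).natDegree + 1 with hKdef
  have hK : ∀ k, K ≤ k → (shiftMinus p).coeff k = 0 := fun k hk =>
    Polynomial.coeff_eq_zero_of_natDegree_lt (by omega)
  have hK' : ∀ k, K ≤ k → (shiftMinus (shiftT a p)).coeff k = 0 := fun k hk => by
    rw [coeff_shiftMinus_shiftT, hK k hk, map_zero]
  set L := K + j.natAbs with hLdef
  have hvan : ∀ ℓ : ℕ, L ≤ ℓ → phiHat (j + ℓ) (shiftT a p) = 0 := by
    intro ℓ hℓ
    refine phiHat_eq_zero _ _ K hK' fun k hk => ?_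
    omega
  have hsupp : (Function.support fun ℓ : ℕ => sC ℓ (seqTilde a) • phiHat (j + ℓ) (shiftT a p))
      ⊆ ↑(Finset.range L) := by
    intro ℓ hℓ
    simp only [Function.mem_support] at hℓ
    simp only [Finset.coe_range, Set.mem_Iio]
    by_contra h
    push_neg at h
    exact hℓ (by rw [hvan ℓ h, smul_zero])
  rw [finsum_eq_finset_sum_of_support_subset
    (fun ℓ : ℕ => sC ℓ (seqTilde a) • phiHat (j + ℓ) (shiftT a p)) hsupp]
  rw [phiHat_eq_sum j p K hK, map_smul, map_sum]
  have hterm : ∀ k ∈ Finset.range K,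
      shiftT a (sTildeZ ((k : ℤ) - j) * (shiftMinus p).coeff k) =
        ∑ ℓ ∈ Finset.range L, sC ℓ (seqTilde a) •
          (sTildeZ ((k : ℤ) - (j + ℓ)) * (shiftMinus (shiftT a p)).coeff k) := by
    intro k hk
    have hkK : k < K := Finset.mem_range.mp hk
    rw [map_mul, shiftT_sTildeZ a ((k : ℤ) - j) L (by omega), ← coeff_shiftMinus_shiftT,
      Finset.sum_mul]
    refine Finset.sum_congr rfl fun ℓ _ => ?_
    rw [smul_mul_assoc, sub_sub]
  rw [Finset.sum_congr rfl hterm, Finset.sum_comm, Finset.smul_sum]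
  refine Finset.sum_congr rfl fun ℓ _ => ?_
  rw [phiHat_eq_sum (j + ℓ) (shiftT a p) K hK', ← Finset.smul_sum, smul_comm]

end
end

section
/- For integers λ > μ ≥ 0 and sequences c, c′ of complex numbers, define the operators v̂(λ,c) = Σ_{m≥0} s_m(c) φ̂_{m−λ} and v̂(μ,c′) = Σ_{m≥0} s_m(c′) φ̂_{m−μ} on B = ℂ[t_1,t_3,t_5,…] (finite sums when applied to any polynomial). Then ev_0( v̂(λ,c) v̂(μ,c′) · 1 ) = (1/2) s_λ(c) s_μ(c′) + Σ_{ℓ=1}^{μ} (−1)^ℓ s_{λ+ℓ}(c) s_{μ−ℓ}(c′) = χ_{λ,μ}(c,c′). -/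
noncomputable section

/-- The operator `v̂(λ,c) = ∑_{m≥0} s_m(c) φ̂_{m-λ}` on `B` (a finite sum on each
polynomial). -/
noncomputable def vHat (l : ℕ) (c : ℕ → ℂ) (p : BRing) : BRing :=
  ∑ᶠ m : ℕ, sC m c • phiHat ((m : ℤ) - l) p

/-- `χ_{λ,μ}(c,c')` for complex sequences `c, c'`. -/
noncomputable def chiC (l μ : ℕ) (c c' : ℕ → ℂ) : ℂ :=
  (2 : ℂ)⁻¹ * (sC l c * sC μ c') +
    ∑ ℓ ∈ Finset.Icc 1 μ, (-1 : ℂ) ^ ℓ * (sC (l + ℓ) c * sC (μ - ℓ) c')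

/- ## Auxiliary development for the proof -/

section Aux

open MvPolynomial

/-- coefficients `e_n`: `e_0 = 1`, `e_n = 2(-1)^n` for `n ≥ 1`. -/
def eCoef : ℕ → ℂ := fun n => if n = 0 then 1 else 2 * (-1) ^ n

lemma Tsum_eq (n : ℕ) :
    ∑ j ∈ Finset.range (n + 1), (if j % 2 = 0 then (-2) * eCoef (n - j) else 0)
      = ((n : ℂ) + 1) * eCoef (n + 1) := by
  induction n using Nat.strong_induction_on with
  | _ n ih =>
    match n with
    | 0 => norm_num [eCoef]
    | 1 =>
      rw [Finset.sum_range_succ, Finset.sum_range_one]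
      norm_num [eCoef]
    | (n + 2) =>
      rw [Finset.sum_range_succ', Finset.sum_range_succ']
      have hiff : ∀ j, ((j + 1 + 1) % 2 = 0 ↔ j % 2 = 0) := by omega
      have h1 : ∀ j ∈ Finset.range (n + 1),
          (if (j + 1 + 1) % 2 = 0 then (-2 : ℂ) * eCoef (n + 2 - (j + 1 + 1)) else 0)
          = (if j % 2 = 0 then (-2) * eCoef (n - j) else 0) := by
        intro j _
        have h2 : n + 2 - (j + 1 + 1) = n - j := by omega
        simp only [hiff, h2]
      rw [Finset.sum_congr rfl h1, ih n (by omega)]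
      simp [eCoef]
      ring

def uSeq : ℕ → Polynomial ℂ := fun j =>
  if j % 2 = 1 then (-(2 / (j : ℂ))) • Polynomial.X ^ j else 0

def qPoly (n : ℕ) : Polynomial ℂ := MvPolynomial.aeval uSeq (schurPoly n)

lemma qPoly_eq (n : ℕ) : qPoly n = eCoef n • Polynomial.X ^ n := by
  induction n using Nat.strong_induction_on with
  | _ n ih =>
    match n with
    | 0 => simp [qPoly, schurPoly, eCoef]
    | (n + 1) =>
      have step : ∀ j ∈ Finset.range (n + 1),
          ((j : ℂ) + 1) • (uSeq (j + 1) * qPoly (n - j))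
            = (if j % 2 = 0 then (-2 : ℂ) * eCoef (n - j) else 0) • Polynomial.X ^ (n + 1) := by
        intro j hj
        have hle : j ≤ n := Nat.lt_succ_iff.mp (Finset.mem_range.mp hj)
        rw [ih (n - j) (by omega)]
        by_cases hp : j % 2 = 0
        · have h1 : (j + 1) % 2 = 1 := by omega
          have hx : Polynomial.X ^ (j + 1) * Polynomial.X ^ (n - j)
              = (Polynomial.X : Polynomial ℂ) ^ (n + 1) := by
            rw [← pow_add]; congr 1; omega
          rw [if_pos hp]
          simp only [uSeq, if_pos h1]
          rw [smul_mul_assoc, mul_smul_comm, hx, smul_smul, smul_smul]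
          congr 1
          have hne : ((j : ℂ) + 1) ≠ 0 := Nat.cast_add_one_ne_zero j
          push_cast
          field_simp
        · have h0 : ¬ ((j + 1) % 2 = 1) := by omega
          rw [if_neg hp]
          simp only [uSeq, if_neg h0]
          simp
      have hq : qPoly (n + 1) = ((n : ℂ) + 1)⁻¹ •
          ∑ j ∈ Finset.range (n + 1), ((j : ℂ) + 1) • (uSeq (j + 1) * qPoly (n - j)) := by
        rw [qPoly, schurPoly, map_smul]
        congr 1
        rw [map_sum]
        refine Finset.sum_congr rfl fun j hj => ?_
        rw [map_smul, map_mul, MvPolynomial.aeval_X]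
        rfl
      rw [hq, Finset.sum_congr rfl step, ← Finset.sum_smul, Tsum_eq, smul_smul]
      congr 1
      have hne : ((n : ℂ) + 1) ≠ 0 := Nat.cast_add_one_ne_zero n
      field_simp

end Aux

section Aux2

open MvPolynomial

lemma ev0_ringhom (p : BRing) : ev0 p = MvPolynomial.eval (fun _ => (0:ℂ)) p := rfl

/-- The evaluation-at-0 algebra hom. -/
def ev0Alg : BRing →ₐ[ℂ] ℂ := MvPolynomial.aeval (fun _ => 0)

lemma ev0_alg (p : BRing) : ev0 p = ev0Alg p := by
  rw [ev0_ringhom, ev0Alg, ← MvPolynomial.coe_aeval_eq_eval]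
  rfl

lemma schur_zero (n : ℕ) :
    MvPolynomial.aeval (fun _ => (0:ℂ)) (schurPoly n) = if n = 0 then 1 else 0 := by
  cases n with
  | zero => simp [schurPoly]
  | succ n => rw [schurPoly]; simp

lemma ev0_sTildeZ (m : ℤ) : ev0 (sTildeZ m) = if m = 0 then 1 else 0 := by
  rw [sTildeZ]
  by_cases h : 0 ≤ m
  · rw [if_pos h, ev0_alg, MvPolynomial.comp_aeval_apply]
    have h0 : (fun j => ev0Alg (tTilde j)) = fun _ => (0:ℂ) := by
      funext j
      simp only [tTilde]
      split_ifs <;> simp [ev0Alg]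
    rw [h0, schur_zero]
    split_ifs with h1 h2 h2 <;> first | rfl | omega
  · rw [if_neg h]
    have hm : m ≠ 0 := by omega
    simp [hm, ev0_ringhom]

/-- mapping `shiftMinus (s̃_n)` coefficientwise through `ev0` gives `qPoly n`. -/
lemma map_shiftMinus_sTilde (p : MvPolynomial ℕ ℂ) :
    Polynomial.map (MvPolynomial.eval (fun _ => (0:ℂ)))
        (shiftMinus (MvPolynomial.aeval tTilde p))
      = MvPolynomial.aeval uSeq p := by
  have h1 : shiftMinus (MvPolynomial.aeval tTilde p)
      = MvPolynomial.aeval (fun j => shiftMinus (tTilde j)) p :=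
    MvPolynomial.comp_aeval_apply (f := tTilde)
      (MvPolynomial.aeval fun i => Polynomial.C (MvPolynomial.X i) -
        Polynomial.C (MvPolynomial.C ((2 : ℂ) / ((2 * i + 1 : ℕ) : ℂ))) *
          Polynomial.X ^ (2 * i + 1)) p
  rw [h1]
  have h2 : Polynomial.map (MvPolynomial.eval fun _ => (0:ℂ))
        (MvPolynomial.aeval (fun j => shiftMinus (tTilde j)) p)
      = MvPolynomial.aeval
          (fun j => Polynomial.map (MvPolynomial.eval fun _ => (0:ℂ)) (shiftMinus (tTilde j))) p :=
    MvPolynomial.comp_aeval_apply (f := fun j => shiftMinus (tTilde j)) (Polynomial.mapAlgHom ev0Alg) p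
  rw [h2]
  have h6 : (fun j => Polynomial.map (MvPolynomial.eval fun _ => (0:ℂ)) (shiftMinus (tTilde j)))
      = uSeq := by
    funext j
    by_cases hj : j % 2 = 1
    · have h3 : tTilde j = MvPolynomial.X ((j - 1) / 2) := by simp [tTilde, hj]
      have h4 : shiftMinus (MvPolynomial.X ((j - 1) / 2)) =
          Polynomial.C (MvPolynomial.X ((j-1)/2)) -
            Polynomial.C (MvPolynomial.C ((2 : ℂ) / ((2 * ((j-1)/2) + 1 : ℕ) : ℂ))) *
              Polynomial.X ^ (2 * ((j-1)/2) + 1) := by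
        simp [shiftMinus]
      have h5 : 2 * ((j - 1) / 2) + 1 = j := by omega
      rw [h3, h4, h5]
      rw [Polynomial.map_sub, Polynomial.map_mul, Polynomial.map_pow, Polynomial.map_C,
        Polynomial.map_C, Polynomial.map_X]
      simp [uSeq, hj, Polynomial.smul_eq_C_mul]
    · have h3 : tTilde j = 0 := by simp [tTilde, hj]
      rw [h3]
      simp [shiftMinus, uSeq, hj]
  rw [h6]

lemma ev0_coeff_sTilde (n k : ℕ) :
    ev0 ((shiftMinus (MvPolynomial.aeval tTilde (schurPoly n))).coeff k)
      = if k = n then eCoef n else 0 := by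
  have h := congrArg (fun q => Polynomial.coeff q k) (map_shiftMinus_sTilde (schurPoly n))
  simp only [Polynomial.coeff_map] at h
  rw [ev0_ringhom, h, ← qPoly, qPoly_eq]
  rw [Polynomial.coeff_smul, Polynomial.coeff_X_pow]
  split_ifs <;> simp

end Aux2

section Aux3

open MvPolynomial

lemma shiftMinus_def (p : BRing) : shiftMinus p =
    (MvPolynomial.aeval (fun i => Polynomial.C (MvPolynomial.X i) -
      Polynomial.C (MvPolynomial.C ((2 : ℂ) / ((2 * i + 1 : ℕ) : ℂ))) *
        Polynomial.X ^ (2 * i + 1)) : BRing →ₐ[ℂ] Polynomial BRing) p := rfl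

lemma ev0_sum {α : Type*} (s : Finset α) (f : α → BRing) :
    ev0 (∑ a ∈ s, f a) = ∑ a ∈ s, ev0 (f a) :=
  map_sum (MvPolynomial.eval fun _ => (0:ℂ)) f s

lemma ev0_smul (a : ℂ) (p : BRing) : ev0 (a • p) = a * ev0 p :=
  MvPolynomial.smul_eval _ _ _

lemma phiHat_one (j : ℤ) : phiHat j (1 : BRing) = sqrt2⁻¹ • sTildeZ (-j) := by
  rw [phiHat]
  congr 1
  have h1 : shiftMinus (1 : BRing) = 1 := by rw [shiftMinus_def, map_one]
  rw [h1]
  rw [finsum_eq_single _ 0]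
  · simp
  · intro k hk
    rw [Polynomial.coeff_one]
    simp [hk]

lemma phiHat_vanish (j : ℤ) (p : BRing) (hD : ((shiftMinus p).natDegree : ℤ) < j) :
    phiHat j p = 0 := by
  rw [phiHat]
  have h : ∀ k : ℕ, sTildeZ ((k:ℤ) - j) * (shiftMinus p).coeff k = 0 := by
    intro k
    by_cases hk : (k:ℤ) < j
    · rw [sTildeZ, if_neg (by omega), zero_mul]
    · rw [Polynomial.coeff_eq_zero_of_natDegree_lt (by omega), mul_zero]
  rw [finsum_congr h]
  simp

lemma ev0_phiHat (j : ℤ) (p : BRing) :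
    ev0 (phiHat j p) = sqrt2⁻¹ *
      (if 0 ≤ j then ev0 ((shiftMinus p).coeff j.toNat) else 0) := by
  rw [phiHat, ev0_ringhom, MvPolynomial.smul_eval]
  congr 1
  have hsupp : (Function.support fun k : ℕ => sTildeZ ((k:ℤ) - j) * (shiftMinus p).coeff k)
      ⊆ ((Finset.range ((shiftMinus p).natDegree + 1) : Finset ℕ) : Set ℕ) := by
    intro k hk
    simp only [Function.mem_support] at hk
    simp only [Finset.coe_range, Set.mem_Iio]
    by_contra hk2
    exact hk (by rw [Polynomial.coeff_eq_zero_of_natDegree_lt (by omega), mul_zero])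
  rw [finsum_eq_finset_sum_of_support_subset _ hsupp, map_sum]
  rw [Finset.sum_eq_single j.toNat]
  · rw [map_mul, ← ev0_ringhom (sTildeZ _), ev0_sTildeZ, ← ev0_ringhom]
    by_cases hj : 0 ≤ j
    · rw [if_pos (by omega : ((j.toNat : ℤ) - j) = 0), if_pos hj, one_mul]
    · rw [if_neg (by omega : ¬ ((j.toNat : ℤ) - j) = 0), if_neg hj, zero_mul]
  · intro k _ hk
    rw [map_mul, ← ev0_ringhom (sTildeZ _), ev0_sTildeZ, if_neg (by omega), zero_mul]
  · intro hk
    simp only [Finset.mem_range, not_lt] at hk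
    rw [Polynomial.coeff_eq_zero_of_natDegree_lt (by omega), mul_zero, map_zero]

lemma vHat_one (μ : ℕ) (c' : ℕ → ℂ) :
    vHat μ c' 1 = ∑ a ∈ Finset.range (μ + 1),
      (sC a c' * sqrt2⁻¹) • sTildeZ ((μ:ℤ) - a) := by
  rw [vHat]
  have h1 : ∀ m : ℕ, sC m c' • phiHat ((m:ℤ) - μ) 1
      = (sC m c' * sqrt2⁻¹) • sTildeZ ((μ:ℤ) - m) := by
    intro m
    rw [phiHat_one, smul_smul, neg_sub]
  rw [finsum_congr h1]
  apply finsum_eq_finset_sum_of_support_subset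
  intro m hm
  simp only [Function.mem_support] at hm
  simp only [Finset.coe_range, Set.mem_Iio]
  by_contra h2
  exact hm (by rw [sTildeZ, if_neg (by omega), smul_zero])

lemma ev0_coeff_tau (μ : ℕ) (c' : ℕ → ℂ) (k : ℕ) :
    ev0 ((shiftMinus (vHat μ c' 1)).coeff k)
      = if k ≤ μ then sC (μ - k) c' * sqrt2⁻¹ * eCoef k else 0 := by
  have key : ∀ a ∈ Finset.range (μ + 1),
      ev0 ((shiftMinus ((sC a c' * sqrt2⁻¹) • sTildeZ ((μ:ℤ) - a))).coeff k)
        = (sC a c' * sqrt2⁻¹) * (if k = μ - a then eCoef (μ - a) else 0) := by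
    intro a ha
    have haμ : a < μ + 1 := Finset.mem_range.mp ha
    have hst : sTildeZ ((μ:ℤ) - a) = MvPolynomial.aeval tTilde (schurPoly (μ - a)) := by
      rw [sTildeZ, if_pos (by omega : (0:ℤ) ≤ (μ:ℤ) - a)]
      have h5 : ((μ:ℤ) - (a:ℤ)).toNat = μ - a := by omega
      rw [h5]
    rw [shiftMinus_def, map_smul, Polynomial.coeff_smul, ← shiftMinus_def, hst,
      ev0_smul, ev0_coeff_sTilde]
  have e1 : (shiftMinus (∑ a ∈ Finset.range (μ+1),
        (sC a c' * sqrt2⁻¹) • sTildeZ ((μ:ℤ) - a))).coeff k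
      = ∑ a ∈ Finset.range (μ+1),
        (shiftMinus ((sC a c' * sqrt2⁻¹) • sTildeZ ((μ:ℤ) - a))).coeff k := by
    rw [shiftMinus_def, map_sum, Polynomial.finset_sum_coeff]
    rfl
  rw [vHat_one, e1, ev0_sum, Finset.sum_congr rfl key]
  rw [Finset.sum_eq_single (μ - k)]
  · by_cases hk : k ≤ μ
    · rw [if_pos hk, if_pos (by omega : k = μ - (μ - k))]
      have h2 : μ - (μ - k) = k := by omega
      rw [h2]
    · rw [if_neg (by omega : ¬ k = μ - (μ - k)), if_neg hk, mul_zero]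
  · intro a ha hne
    have haμ : a < μ + 1 := Finset.mem_range.mp ha
    rw [if_neg (by omega), mul_zero]
  · intro h2
    exact absurd (Finset.mem_range.mpr (by omega)) h2

end Aux3

/-- For integers `λ > μ ≥ 0` and sequences `c, c'` of complex numbers,
`ev₀( v̂(λ,c) v̂(μ,c') · 1 ) = (1/2) s_λ(c) s_μ(c') + ∑_{ℓ=1}^{μ} (-1)^ℓ s_{λ+ℓ}(c) s_{μ-ℓ}(c')
 = χ_{λ,μ}(c,c')`. -/
theorem vev_chi (l μ : ℕ) (h : μ < l) (c c' : ℕ → ℂ) :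
    ev0 (vHat l c (vHat μ c' 1)) = chiC l μ c c' := by
  have hs2 : sqrt2 * sqrt2 = 2 := by
    rw [sqrt2]
    norm_cast
    exact Real.mul_self_sqrt (by norm_num)
  have hs : sqrt2⁻¹ * sqrt2⁻¹ = (2:ℂ)⁻¹ := by
    rw [← mul_inv, hs2]
  set τ := vHat μ c' 1 with hτ
  set D := (shiftMinus τ).natDegree with hD
  set N := D + l + μ + 2 with hN
  have hA : ev0 (vHat l c τ) = ∑ m ∈ Finset.range N, sC m c * ev0 (phiHat ((m:ℤ) - l) τ) := by
    rw [vHat]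
    have hsupp : (Function.support fun m : ℕ => sC m c • phiHat ((m:ℤ) - l) τ)
        ⊆ ((Finset.range N : Finset ℕ) : Set ℕ) := by
      intro m hm
      simp only [Function.mem_support] at hm
      simp only [Finset.coe_range, Set.mem_Iio]
      by_contra h2
      push_neg at h2
      rw [hN] at h2
      exact hm (by rw [phiHat_vanish _ _ (by omega), smul_zero])
    rw [finsum_eq_finset_sum_of_support_subset _ hsupp, ev0_sum]
    exact Finset.sum_congr rfl fun m _ => ev0_smul _ _
  rw [hA]
  have hB : ∀ m : ℕ, sC m c * ev0 (phiHat ((m:ℤ) - l) τ)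
      = if l ≤ m ∧ m ≤ l + μ then
          sC (l + (m - l)) c * sqrt2⁻¹ * (sC (μ - (m - l)) c' * sqrt2⁻¹ * eCoef (m - l))
        else 0 := by
    intro m
    rw [ev0_phiHat]
    by_cases hm : l ≤ m
    · rw [if_pos (by omega : (0:ℤ) ≤ (m:ℤ) - l)]
      have htn : ((m:ℤ) - (l:ℤ)).toNat = m - l := by omega
      rw [htn, hτ, ev0_coeff_tau]
      by_cases hm2 : m ≤ l + μ
      · rw [if_pos (by omega : m - l ≤ μ), if_pos (by constructor <;> omega)]
        have hml : l + (m - l) = m := by omega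
        rw [hml]
        ring
      · rw [if_neg (by omega : ¬ (m - l ≤ μ)), if_neg (by omega)]
        ring
    · rw [if_neg (by omega : ¬ (0:ℤ) ≤ (m:ℤ) - l), if_neg (by omega)]
      ring
  rw [Finset.sum_congr rfl fun m _ => hB m]
  -- restrict the sum to `Ico l (l + μ + 1)` and reindex
  have hsub : Finset.Ico l (l + μ + 1) ⊆ Finset.range N := by
    intro x hx
    rw [Finset.mem_Ico] at hx
    rw [Finset.mem_range, hN]
    omega
  rw [← Finset.sum_subset hsub (fun x hx hx2 => by
    rw [Finset.mem_range] at hx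
    rw [Finset.mem_Ico] at hx2
    rw [if_neg (by omega)])]
  rw [Finset.sum_Ico_eq_sum_range]
  have hrange : l + μ + 1 - l = μ + 1 := by omega
  rw [hrange]
  have hterm : ∀ i ∈ Finset.range (μ + 1),
      (if l ≤ l + i ∧ l + i ≤ l + μ then
          sC (l + (l + i - l)) c * sqrt2⁻¹ *
            (sC (μ - (l + i - l)) c' * sqrt2⁻¹ * eCoef (l + i - l))
        else 0)
      = sC (l + i) c * sqrt2⁻¹ * (sC (μ - i) c' * sqrt2⁻¹ * eCoef i) := by
    intro i hi
    rw [Finset.mem_range] at hi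
    rw [if_pos (by constructor <;> omega), Nat.add_sub_cancel_left]
  rw [Finset.sum_congr rfl hterm, Finset.sum_range_succ']
  -- now compare with `chiC`
  have h0 : sC (l + 0) c * sqrt2⁻¹ * (sC (μ - 0) c' * sqrt2⁻¹ * eCoef 0)
      = 2⁻¹ * (sC l c * sC μ c') := by
    have e0 : eCoef 0 = 1 := by simp [eCoef]
    rw [Nat.add_zero, Nat.sub_zero, e0]
    linear_combination (sC l c * sC μ c') * hs
  rw [h0, chiC, ← Finset.Ico_add_one_right_eq_Icc, Finset.sum_Ico_eq_sum_range]
  have hrange2 : μ + 1 - 1 = μ := by omega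
  rw [hrange2, add_comm (2⁻¹ * (sC l c * sC μ c'))]
  congr 1
  refine Finset.sum_congr rfl fun i _ => ?_
  have he : eCoef (i + 1) = 2 * (-1) ^ (i + 1) := by simp [eCoef]
  have h1i : 1 + i = i + 1 := by omega
  rw [h1i, he]
  linear_combination (2 * (-1 : ℂ) ^ (i + 1) * sC (l + (i + 1)) c * sC (μ - (i + 1)) c') * hs


end
end
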